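/- arXiv:1805.07759 — 5 statements merged into one kernel-verified Lean document; each statement's English description precedes it below -/
import Mathlib

section
/- For every hyperhermitian quaternionic n×n matrix 𝓜 there exists a quaternionic unitary matrix 𝓔 ∈ U_ℍ(n) such that 𝓔*𝓜𝓔 is a diagonal matrix with real diagonal entries. -/
open scoped Quaternion
open Matrix Sum

noncomputable section

/-- The complex part `a` in the decomposition `q = a + b·j` of a quaternion. -/
def qa (q : ℍ[ℝ]) : ℂ := ⟨q.re, q.imI⟩

/-- The complex part `b` in the decomposition `q = a + b·j` of a quaternion. -/
def qb (q : ℍ[ℝ]) : ℂ := ⟨q.imJ, q.imK⟩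

/-- Entrywise complex conjugation of a complex matrix. -/
def conjM {m k : Type*} (M : Matrix m k ℂ) : Matrix m k ℂ := M.map (starRingEnd ℂ)

/-- The embedding τ : M_ℍ(p,m) → M_ℂ(2p,2m), τ(a + b·j) = [[a, −b],[conj b, conj a]]. -/
def tau {p m : ℕ} (M : Matrix (Fin p) (Fin m) ℍ[ℝ]) :
    Matrix (Fin p ⊕ Fin p) (Fin m ⊕ Fin m) ℂ :=
  Matrix.fromBlocks (M.map qa) (-(M.map qb)) (conjM (M.map qb)) (conjM (M.map qa))

/-- The standard symplectic matrix J = [[0, Iₙ],[−Iₙ, 0]]. -/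
def Jmat (n : ℕ) : Matrix (Fin n ⊕ Fin n) (Fin n ⊕ Fin n) ℂ :=
  Matrix.fromBlocks 0 1 (-1) 0

/-- index set {0,…,2n−1}, as two blocks. -/
abbrev Idx (n : ℕ) := Fin n ⊕ Fin n

/-- ℂ^{2n}. -/
abbrev Vc (n : ℕ) := Idx n → ℂ

/-- The exterior algebra of ℂ^{2n}. -/
abbrev EA (n : ℕ) := ExteriorAlgebra ℂ (Vc n)

/-- Basis 1-vectors ω^A of the exterior algebra. -/
def ω {n : ℕ} (A : Idx n) : EA n := ExteriorAlgebra.ι ℂ (Pi.single A 1)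

/-- Ω_{2n} = ω⁰∧ω^n∧ω¹∧ω^{n+1}∧…∧ω^{n−1}∧ω^{2n−1}. -/
def Ωn (n : ℕ) : EA n := (List.ofFn fun l : Fin n => ω (inl l) * ω (inr l)).prod

/-- β_n = Σ_l ω^l∧ω^{n+l}. -/
def βn (n : ℕ) : EA n := ∑ l : Fin n, ω (inl l) * ω (inr l)

/-- Induced action of a 2n×2n complex matrix on the exterior algebra,
determined by N.ω^A = Σ_B N_{AB} ω^B. -/
def actE {n : ℕ} (N : Matrix (Idx n) (Idx n) ℂ) : EA n →ₐ[ℂ] EA n :=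
  ExteriorAlgebra.map (Matrix.mulVecLin Nᵀ)

/-- ℝ^{4n}. -/
abbrev V4 (n : ℕ) := Fin (4 * n) → ℝ

/-- The coordinate index 4l+β. -/
def X {n : ℕ} (l : Fin n) (β : Fin 4) : Fin (4 * n) :=
  ⟨4 * l.val + β.val, by have h1 := l.isLt; have h2 := β.isLt; omega⟩

/-- Partial derivative of a complex-valued function on ℝ^{4n}. -/
def pd {n : ℕ} (a : Fin (4 * n)) (f : V4 n → ℂ) : V4 n → ℂ :=
  fun q => fderiv ℝ f q (Pi.single a 1)

/-- The operators ∇_{Aα}, α = 0' (α=0) or 1' (α=1). -/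
def nabla {n : ℕ} (A : Idx n) (α : Fin 2) (f : V4 n → ℂ) : V4 n → ℂ :=
  fun q =>
    match A with
    | Sum.inl l =>
        if α = 0 then pd (X l 0) f q + Complex.I * pd (X l 1) f q
        else -pd (X l 2) f q - Complex.I * pd (X l 3) f q
    | Sum.inr l =>
        if α = 0 then pd (X l 2) f q - Complex.I * pd (X l 3) f q
        else pd (X l 0) f q - Complex.I * pd (X l 1) f q

/-- ∇_{Aα} applied to a real-valued function. -/
def nablaR {n : ℕ} (A : Idx n) (α : Fin 2) (u : V4 n → ℝ) : V4 n → ℂ :=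
  nabla A α (fun x => ((u x : ℝ) : ℂ))

/-- Δ_{AB}u = ½(∇_{A0'}∇_{B1'}u − ∇_{B0'}∇_{A1'}u). -/
def Delta {n : ℕ} (A B : Idx n) (u : V4 n → ℝ) : V4 n → ℂ :=
  fun q => (1 / 2 : ℂ) *
    (nabla A 0 (nabla B 1 (fun x => ((u x : ℝ) : ℂ))) q
      - nabla B 0 (nabla A 1 (fun x => ((u x : ℝ) : ℂ))) q)

/-- The Baston operator Δu = Σ_{A,B} Δ_{AB}u · ω^A∧ω^B. -/
def Baston {n : ℕ} (u : V4 n → ℝ) (q : V4 n) : EA n :=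
  ∑ A : Idx n, ∑ B : Idx n, Delta A B u q • (ω A * ω B)

/-- The quaternion units. -/
def iH : ℍ[ℝ] := ⟨0, 1, 0, 0⟩
def jH : ℍ[ℝ] := ⟨0, 0, 1, 0⟩
def kH : ℍ[ℝ] := ⟨0, 0, 0, 1⟩

/-- Partial derivative of a quaternion-valued function on ℝ^{4n}. -/
def pdH {n : ℕ} (a : Fin (4 * n)) (f : V4 n → ℍ[ℝ]) : V4 n → ℍ[ℝ] :=
  fun q => fderiv ℝ f q (Pi.single a 1)

/-- Partial derivative of a real-valued function on ℝ^{4n}. -/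
def pdR {n : ℕ} (a : Fin (4 * n)) (f : V4 n → ℝ) : V4 n → ℝ :=
  fun q => fderiv ℝ f q (Pi.single a 1)

/-- ∂u/∂q_k = (∂_{x_{4k}} − i∂_{x_{4k+1}} − j∂_{x_{4k+2}} − k∂_{x_{4k+3}})u for real u. -/
def dq {n : ℕ} (k : Fin n) (u : V4 n → ℝ) : V4 n → ℍ[ℝ] :=
  fun q => ⟨pdR (X k 0) u q, -pdR (X k 1) u q, -pdR (X k 2) u q, -pdR (X k 3) u q⟩

/-- ∂/∂q̄_l = ∂_{x_{4l}} + i∂_{x_{4l+1}} + j∂_{x_{4l+2}} + k∂_{x_{4l+3}} on ℍ-valued functions. -/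
def dqbar {n : ℕ} (l : Fin n) (f : V4 n → ℍ[ℝ]) : V4 n → ℍ[ℝ] :=
  fun q => pdH (X l 0) f q + iH * pdH (X l 1) f q + jH * pdH (X l 2) f q + kH * pdH (X l 3) f q

/-- The quaternionic Hessian of a real function u. -/
def Hess {n : ℕ} (u : V4 n → ℝ) (q : V4 n) : Matrix (Fin n) (Fin n) ℍ[ℝ] :=
  Matrix.of fun l k => dqbar l (dq k u) q

/-- ω^I = ω^{i₁}∧…∧ω^{i_p} for a multi-index I. -/
def ωProd {n p : ℕ} (I : Fin p → Idx n) : EA n :=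
  (List.ofFn fun j => ω (I j)).prod

/-- The Λ^pℂ^{2n}-valued function with coefficient functions f: F = Σ_I f_I ω^I. -/
def formVal {n p : ℕ} (f : (Fin p → Idx n) → V4 n → ℂ) (q : V4 n) : EA n :=
  ∑ I : Fin p → Idx n, f I q • ωProd I

/-- Coefficients of d_α F for F with coefficients f:
d_αF = Σ_{A,I} ∇_{Aα}f_I · ω^A∧ω^I. -/
def dcoef {n p : ℕ} (α : Fin 2) (f : (Fin p → Idx n) → V4 n → ℂ) :
    (Fin (p + 1) → Idx n) → V4 n → ℂ :=
  fun J => nabla (J 0) α (f (Fin.tail J))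

/-- Coefficients of the wedge product F∧G. -/
def wedgeCoef {n p q : ℕ} (f : (Fin p → Idx n) → V4 n → ℂ)
    (g : (Fin q → Idx n) → V4 n → ℂ) : (Fin (p + q) → Idx n) → V4 n → ℂ :=
  fun J x => f (fun i => J (Fin.castAdd q i)) x * g (fun i => J (Fin.natAdd p i)) x

/-- The complex coordinate functions z^{Aα}. -/
def zc {n : ℕ} (A : Idx n) (α : Fin 2) : V4 n → ℂ :=
  fun x =>
    match A with
    | Sum.inl l => if α = 0 then ⟨x (X l 0), -x (X l 1)⟩ else ⟨-x (X l 2), x (X l 3)⟩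
    | Sum.inr l => if α = 0 then ⟨x (X l 2), x (X l 3)⟩ else ⟨x (X l 0), x (X l 1)⟩

/-- The quaternionic vector associated to a point of ℝ^{4n}. -/
def quatv {n : ℕ} (v : V4 n) : Fin n → ℍ[ℝ] :=
  fun l => ⟨v (X l 0), v (X l 1), v (X l 2), v (X l 3)⟩

/-- The four real components of a quaternion. -/
def comp4 (q : ℍ[ℝ]) : Fin 4 → ℝ := ![q.re, q.imI, q.imJ, q.imK]

/-- The real-linear action of a quaternionic matrix 𝓤 on ℝ^{4n} ≅ ℍⁿ, q ↦ 𝓤q. -/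
def act {n : ℕ} (U : Matrix (Fin n) (Fin n) ℍ[ℝ]) (v : V4 n) : V4 n :=
  fun a => comp4 ((U *ᵥ quatv v) ⟨a.val / 4, by have := a.isLt; omega⟩)
    ⟨a.val % 4, by omega⟩

/-
Via the complex representation `tau`, a hyperhermitian `𝓜` becomes a Hermitian complex
`2n × 2n` matrix. A unit eigenvector `z` of `tau 𝓜`, with real eigenvalue `μ`, is the first
column of `tau v` for a quaternionic unit vector `v` with `𝓜 v = μ v`. After a right
multiplication by a unit quaternion the last entry of `v` is real, and a Householder reflection
`U` then has `v` as its last column. Now `U* 𝓜 U` is block diagonal with blocks `N` (of size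
`n - 1`, hyperhermitian) and `μ`, and we induct on `n`.
-/

@[norm_cast]
lemma Quaternion.coe_sum {ι : Type*} (s : Finset ι) (f : ι → ℝ) :
    ((∑ i ∈ s, f i : ℝ) : ℍ[ℝ]) = ∑ i ∈ s, (f i : ℍ[ℝ]) :=
  map_sum (algebraMap ℝ ℍ[ℝ]) f s

instance : StarModule ℝ ℍ[ℝ] := ⟨fun r q => by ext <;> simp⟩

def quatOfComplex (a b : ℂ) : ℍ[ℝ] := ⟨a.re, a.im, b.re, b.im⟩

section quatOfComplex
variable (a b : ℂ)
@[simp] lemma re_quatOfComplex : (quatOfComplex a b).re = a.re := rfl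
@[simp] lemma imI_quatOfComplex : (quatOfComplex a b).imI = a.im := rfl
@[simp] lemma imJ_quatOfComplex : (quatOfComplex a b).imJ = b.re := rfl
@[simp] lemma imK_quatOfComplex : (quatOfComplex a b).imK = b.im := rfl
end quatOfComplex

lemma qa_star (q : ℍ[ℝ]) : qa (star q) = starRingEnd ℂ (qa q) := by
  simp [qa, Complex.ext_iff]

lemma qb_star (q : ℍ[ℝ]) : qb (star q) = -qb q := by
  simp [qb, Complex.ext_iff]

lemma tau_isHermitian {n : ℕ} {M : Matrix (Fin n) (Fin n) ℍ[ℝ]} (hM : M.IsHermitian) :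
    (tau M).IsHermitian := by
  ext (i | i) (j | j) <;>
    simp [tau, conjM, ← hM.apply i j, qa_star, qb_star]

lemma mul_quatOfComplex (q : ℍ[ℝ]) (a b : ℂ) :
    q * quatOfComplex a b = quatOfComplex (qa q * a - qb q * starRingEnd ℂ b)
      (qa q * b + qb q * starRingEnd ℂ a) := by
  ext <;> simp [qa, qb] <;> ring

lemma sum_quatOfComplex {ι : Type*} (s : Finset ι) (a b : ι → ℂ) :
    ∑ k ∈ s, quatOfComplex (a k) (b k) = quatOfComplex (∑ k ∈ s, a k) (∑ k ∈ s, b k) := by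
  induction s using Finset.cons_induction with
  | empty => ext <;> simp
  | cons i s hi ih => ext <;> simp [Finset.sum_cons, ih]

lemma smul_quatOfComplex (r : ℝ) (a b : ℂ) :
    r • quatOfComplex a b = quatOfComplex (r • a) (r • b) := by
  ext <;> simp

lemma normSq_quatOfComplex (a b : ℂ) :
    Quaternion.normSq (quatOfComplex a b) = Complex.normSq a + Complex.normSq b := by
  simp [Quaternion.normSq_def', Complex.normSq_apply]
  ring

/-- The column whose image under `tau` has first column `z`. -/
def quatVec {n : ℕ} (z : Idx n → ℂ) : Fin n → ℍ[ℝ] :=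
  fun l => quatOfComplex (z (inl l)) (starRingEnd ℂ (z (inr l)))

lemma mulVec_quatVec {n : ℕ} (M : Matrix (Fin n) (Fin n) ℍ[ℝ]) (z : Idx n → ℂ) :
    M *ᵥ quatVec z = quatVec (tau M *ᵥ z) := by
  funext l
  simp only [quatVec, mulVec, dotProduct, mul_quatOfComplex, sum_quatOfComplex,
    Complex.conj_conj, Fintype.sum_sum_type, map_add, map_sum]
  congr 1
  · simp [tau, conjM, sub_eq_add_neg, Finset.sum_add_distrib]
  · simp [tau, conjM, ← Finset.sum_add_distrib, add_comm]

lemma quatVec_smul {n : ℕ} (r : ℝ) (z : Idx n → ℂ) : quatVec (r • z) = r • quatVec z := by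
  funext l
  simp [quatVec, smul_quatOfComplex]

lemma star_quatVec_dotProduct {n : ℕ} (z : Idx n → ℂ) :
    star (quatVec z) ⬝ᵥ quatVec z = ((∑ A, ‖z A‖ ^ 2 : ℝ) : ℍ[ℝ]) := by
  simp [dotProduct, quatVec, Quaternion.star_mul_self, normSq_quatOfComplex,
    Complex.normSq_eq_norm_sq, Fintype.sum_sum_type, Finset.sum_add_distrib, Quaternion.coe_sum]

lemma exists_unit_eigenvector {n : ℕ} [NeZero n] {M : Matrix (Fin n) (Fin n) ℍ[ℝ]}
    (hM : M.IsHermitian) : ∃ (v : Fin n → ℍ[ℝ]) (μ : ℝ), star v ⬝ᵥ v = 1 ∧ M *ᵥ v = μ • v := by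
  have hτ := tau_isHermitian hM
  let z := hτ.eigenvectorBasis (inl 0)
  refine ⟨quatVec z, hτ.eigenvalues (inl 0), ?_, ?_⟩
  · rw [star_quatVec_dotProduct, ← EuclideanSpace.norm_sq_eq, hτ.eigenvectorBasis.orthonormal.1]
    simp
  · rw [mulVec_quatVec, hτ.mulVec_eigenvectorBasis, quatVec_smul]

lemma Quaternion.exists_star_mul_self_eq_one_mul_eq_norm (q : ℍ[ℝ]) :
    ∃ u : ℍ[ℝ], star u * u = 1 ∧ q * u = ‖q‖ := by
  rcases eq_or_ne q 0 with rfl | hq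
  · exact ⟨1, by simp, by simp⟩
  have hq' : ‖q‖ ≠ 0 := norm_ne_zero_iff.mpr hq
  refine ⟨(‖q‖⁻¹ : ℝ) • star q, ?_, ?_⟩
  · rw [star_smul, star_star, smul_mul_smul_comm, Quaternion.self_mul_star,
      Quaternion.normSq_eq_norm_mul_self, ← Quaternion.coe_mul_eq_smul, ← Quaternion.coe_mul,
      show ‖q‖⁻¹ * ‖q‖⁻¹ * (‖q‖ * ‖q‖) = 1 by field_simp, Quaternion.coe_one]
  · rw [mul_smul_comm, Quaternion.self_mul_star, Quaternion.normSq_eq_norm_mul_self,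
      ← Quaternion.coe_mul_eq_smul, ← Quaternion.coe_mul, inv_mul_cancel_left₀ hq']

section UnitVectors

variable {ι : Type*} [Fintype ι]

lemma star_op_smul_dotProduct_op_smul {R : Type*} [Semiring R] [StarRing R] (v : ι → R) (u : R) :
    star (MulOpposite.op u • v) ⬝ᵥ (MulOpposite.op u • v) = star u * (star v ⬝ᵥ v) * u := by
  simp only [dotProduct, Finset.mul_sum, Finset.sum_mul, Pi.star_apply, Pi.smul_apply,
    MulOpposite.smul_eq_mul_unop, MulOpposite.unop_op, star_mul, mul_assoc]

lemma exists_unit_eigenvector_apply_eq_neg_norm {M : Matrix ι ι ℍ[ℝ]} {v : ι → ℍ[ℝ]} {μ : ℝ}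
    (hv : star v ⬝ᵥ v = 1) (hMv : M *ᵥ v = μ • v) (i : ι) :
    ∃ w : ι → ℍ[ℝ], star w ⬝ᵥ w = 1 ∧ M *ᵥ w = μ • w ∧ w i = ((-‖v i‖ : ℝ) : ℍ[ℝ]) := by
  obtain ⟨u, hu, hvu⟩ := Quaternion.exists_star_mul_self_eq_one_mul_eq_norm (v i)
  refine ⟨MulOpposite.op (-u) • v, ?_, ?_, ?_⟩
  · rw [star_op_smul_dotProduct_op_smul, hv, mul_one, star_neg, neg_mul_neg, hu]
  · rw [mulVec_smul, hMv, smul_comm]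
  · simp [hvu]

variable [DecidableEq ι]

lemma mem_unitary_of_isHermitian_of_mul_self {R : Type*} [Semiring R] [StarRing R]
    {H : Matrix ι ι R} (hH : H.IsHermitian) (hHH : H * H = 1) : H ∈ unitary (Matrix ι ι R) := by
  rw [Unitary.mem_iff, star_eq_conjTranspose, hH, and_self, hHH]

/-- A Householder reflection `1 - 2 d d* / ‖d‖²` with `d = w - eᵢ`. -/
lemma exists_unitary_mulVec_single {w : ι → ℍ[ℝ]} (hw : star w ⬝ᵥ w = 1) {i : ι} {r : ℝ}
    (hwi : w i = r) (hr : r ≠ 1) :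
    ∃ H ∈ unitary (Matrix ι ι ℍ[ℝ]), H *ᵥ Pi.single i 1 = w := by
  set d := w - Pi.single i 1
  have hdi : d i = ((r - 1 : ℝ) : ℍ[ℝ]) := by simp [d, hwi]
  have hdd : star d ⬝ᵥ d = ((2 * (1 - r) : ℝ) : ℍ[ℝ]) := by
    simp only [d, star_sub, ← Pi.single_star, star_one, sub_dotProduct, dotProduct_sub, hw,
      dotProduct_single, single_dotProduct, Pi.sub_apply, Pi.star_apply, Pi.single_eq_same, hwi,
      Quaternion.star_coe, mul_one, one_mul]
    norm_cast
    ring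
  set c : ℝ := (1 - r)⁻¹
  have hc : c * (1 - r) = 1 := inv_mul_cancel₀ (sub_ne_zero.mpr hr.symm)
  set D := vecMulVec d (star d)
  have hD : D.IsHermitian := by simp [D, IsHermitian]
  have hDD : D * D = (2 * (1 - r)) • D := by
    rw [vecMulVec_mul_vecMulVec, hdd, ← vecMulVec_smul]
    congr 1
    funext k
    rw [Pi.smul_apply, Pi.smul_apply, smul_eq_mul, Quaternion.coe_mul_eq_smul]
  refine ⟨1 - c • D, mem_unitary_of_isHermitian_of_mul_self ?_ ?_, ?_⟩
  · exact isHermitian_one.sub (hD.smul (IsSelfAdjoint.all c))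
  · have hcDcD : (c • D) * (c • D) = (c + c) • D := by
      rw [smul_mul_smul_comm, hDD, smul_smul]
      congr 1
      linear_combination (2 * c) * hc
    rw [sub_mul, mul_sub, mul_sub, one_mul, mul_one, one_mul, hcDcD, add_smul]
    abel
  · have hDe : D *ᵥ Pi.single i 1 = (r - 1) • d := by
      rw [vecMulVec_mulVec, dotProduct_single, Pi.star_apply, hdi, Quaternion.star_coe, mul_one]
      funext k
      rw [Pi.smul_apply, MulOpposite.smul_eq_mul_unop, MulOpposite.unop_op,
        Quaternion.mul_coe_eq_smul, Pi.smul_apply]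
    rw [sub_mulVec, one_mulVec, smul_mulVec, hDe, smul_smul,
      show c * (r - 1) = -1 by linear_combination -hc, neg_one_smul, sub_neg_eq_add]
    simp [d]

end UnitVectors

lemma Matrix.IsHermitian.eq_fromBlocks_of_toBlocks₁₂_eq_zero {ι κ α : Type*} [AddMonoid α]
    [StarAddMonoid α] {A : Matrix (ι ⊕ κ) (ι ⊕ κ) α} (hA : A.IsHermitian)
    (h : A.toBlocks₁₂ = 0) : A = Matrix.fromBlocks A.toBlocks₁₁ 0 0 A.toBlocks₂₂ := by
  conv_lhs => rw [← fromBlocks_toBlocks A]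
  rw [← fromBlocks_toBlocks A, isHermitian_fromBlocks_iff] at hA
  rw [h, ← hA.2.1, h, conjTranspose_zero]

section Diagonalization

variable {ι κ : Type*} [Fintype ι] [DecidableEq ι] [Fintype κ] [DecidableEq κ]

def IsUnitarilyRealDiagonalizable (M : Matrix ι ι ℍ[ℝ]) : Prop :=
  ∃ E ∈ unitary (Matrix ι ι ℍ[ℝ]), ∃ d : ι → ℝ, star E * M * E = diagonal fun i => (d i : ℍ[ℝ])

namespace IsUnitarilyRealDiagonalizable

lemma diagonal_coe (d : ι → ℝ) :
    IsUnitarilyRealDiagonalizable (diagonal fun i => (d i : ℍ[ℝ])) :=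
  ⟨1, one_mem _, d, by simp⟩

lemma of_star_mul_mul {M U : Matrix ι ι ℍ[ℝ]} (hU : U ∈ unitary (Matrix ι ι ℍ[ℝ]))
    (h : IsUnitarilyRealDiagonalizable (star U * M * U)) : IsUnitarilyRealDiagonalizable M := by
  obtain ⟨E, hE, d, hd⟩ := h
  exact ⟨U * E, mul_mem hU hE, d, by rw [star_mul, ← hd]; simp only [mul_assoc]⟩

lemma submatrix {M : Matrix ι ι ℍ[ℝ]} (h : IsUnitarilyRealDiagonalizable M) (e : κ ≃ ι) :
    IsUnitarilyRealDiagonalizable (M.submatrix e e) := by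
  obtain ⟨E, hE, d, hd⟩ := h
  have hstar : star (E.submatrix e e) = (star E).submatrix e e := conjTranspose_submatrix _ _ _
  refine ⟨E.submatrix e e, ?_, d ∘ e, ?_⟩
  · rw [Unitary.mem_iff, hstar, submatrix_mul_equiv, submatrix_mul_equiv,
      Unitary.star_mul_self_of_mem hE, Unitary.mul_star_self_of_mem hE, submatrix_one_equiv]
    exact ⟨rfl, rfl⟩
  · rw [hstar, submatrix_mul_equiv, submatrix_mul_equiv, hd, submatrix_diagonal_equiv]
    rfl

lemma fromBlocks_zero {A : Matrix ι ι ℍ[ℝ]} {B : Matrix κ κ ℍ[ℝ]}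
    (hA : IsUnitarilyRealDiagonalizable A) (hB : IsUnitarilyRealDiagonalizable B) :
    IsUnitarilyRealDiagonalizable (fromBlocks A 0 0 B) := by
  obtain ⟨E, hE, d, hd⟩ := hA
  obtain ⟨F, hF, d', hd'⟩ := hB
  have hstar : star (fromBlocks E 0 0 F) = fromBlocks (star E) 0 0 (star F) := by
    simp [star_eq_conjTranspose, fromBlocks_conjTranspose]
  refine ⟨fromBlocks E 0 0 F, ?_, Sum.elim d d', ?_⟩
  · rw [Unitary.mem_iff, hstar, fromBlocks_multiply, fromBlocks_multiply]
    simp [Unitary.star_mul_self_of_mem hE, Unitary.mul_star_self_of_mem hE,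
      Unitary.star_mul_self_of_mem hF, Unitary.mul_star_self_of_mem hF, fromBlocks_one]
  · rw [hstar, fromBlocks_multiply, fromBlocks_multiply]
    simp [hd, hd', fromBlocks_diagonal]

end IsUnitarilyRealDiagonalizable

end Diagonalization

lemma IsUnitarilyRealDiagonalizable.of_mulVec_single_last {m : ℕ}
    (ih : ∀ N : Matrix (Fin m) (Fin m) ℍ[ℝ], N.IsHermitian → IsUnitarilyRealDiagonalizable N)
    {A : Matrix (Fin (m + 1)) (Fin (m + 1)) ℍ[ℝ]} (hA : A.IsHermitian) {μ : ℝ}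
    (hAμ : A *ᵥ Pi.single (Fin.last m) 1 = μ • Pi.single (Fin.last m) 1) :
    IsUnitarilyRealDiagonalizable A := by
  have hcol (k : Fin (m + 1)) :
      A k (Fin.last m) = (μ • Pi.single (Fin.last m) 1 : Fin (m + 1) → ℍ[ℝ]) k := by
    simpa using congrFun hAμ k
  let B := A.submatrix finSumFinEquiv finSumFinEquiv
  have hB : B.IsHermitian := hA.submatrix _
  have hlast (b : Fin 1) : Fin.natAdd m b = Fin.last m := by ext; simp [Fin.fin_one_eq_zero b]
  have h₁₂ : B.toBlocks₁₂ = 0 := by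
    ext a b : 1
    simp [B, toBlocks₁₂, hlast, hcol,
      Pi.single_eq_of_ne (show Fin.castAdd 1 a ≠ Fin.last m from (Fin.castSucc_lt_last a).ne)]
  have h₂₂ : B.toBlocks₂₂ = diagonal fun _ => (μ : ℍ[ℝ]) := by
    ext a b : 1
    simp [B, toBlocks₂₂, hlast, hcol, Subsingleton.elim a b, ← Algebra.algebraMap_eq_smul_one,
      Quaternion.algebraMap_def]
  have hBd : IsUnitarilyRealDiagonalizable B := by
    rw [hB.eq_fromBlocks_of_toBlocks₁₂_eq_zero h₁₂, h₂₂]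
    exact (ih _ (hB.submatrix Sum.inl)).fromBlocks_zero (.diagonal_coe _)
  simpa [B] using hBd.submatrix finSumFinEquiv.symm

theorem Matrix.IsHermitian.isUnitarilyRealDiagonalizable :
    ∀ {n : ℕ} {M : Matrix (Fin n) (Fin n) ℍ[ℝ]}, M.IsHermitian → IsUnitarilyRealDiagonalizable M
  | 0, _, _ => ⟨1, one_mem _, 0, Subsingleton.elim _ _⟩
  | m + 1, M, hM => by
    obtain ⟨v, μ, hv, hMv⟩ := exists_unit_eigenvector hM
    obtain ⟨w, hw, hMw, hwi⟩ := exists_unit_eigenvector_apply_eq_neg_norm hv hMv (Fin.last m)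
    -- a nonpositive entry cannot be `1`, which the Householder reflection must avoid
    obtain ⟨U, hU, hUw⟩ := exists_unitary_mulVec_single hw hwi
      (by linarith [norm_nonneg (v (Fin.last m))])
    refine .of_star_mul_mul hU <| .of_mulVec_single_last (μ := μ)
      (fun _ hN => hN.isUnitarilyRealDiagonalizable) (isHermitian_conjTranspose_mul_mul U hM) ?_
    rw [← mulVec_mulVec, ← mulVec_mulVec, hUw, hMw, mulVec_smul, ← hUw, mulVec_mulVec,
      Unitary.star_mul_self_of_mem hU, one_mulVec]

/-- every hyperhermitian quaternionic matrix is diagonalizable with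
real diagonal entries by a quaternionic unitary matrix. -/
theorem stmt_4 {n : ℕ} (M : Matrix (Fin n) (Fin n) ℍ[ℝ]) (hM : Mᴴ = M) :
    ∃ E : Matrix (Fin n) (Fin n) ℍ[ℝ], Eᴴ * E = 1 ∧ E * Eᴴ = 1 ∧
      ∃ d : Fin n → ℝ, Eᴴ * M * E = Matrix.diagonal (fun i => ((d i : ℝ) : ℍ[ℝ])) := by
  obtain ⟨E, hE, d, hd⟩ := Matrix.IsHermitian.isUnitarilyRealDiagonalizable hM
  exact ⟨E, Unitary.star_mul_self_of_mem hE, Unitary.mul_star_self_of_mem hE, d, hd⟩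
end
end

section
/- Let M ∈ M_ℂ(2n,2n) be skew-symmetric. Then J·conj(M) = M·J (this is the condition that the 2-form ω = Σ_{A,B} M_{AB} ω^A∧ω^B is real, i.e., fixed by the conjugate-linear action ρ(j) induced by quaternion multiplication by j) if and only if there exists a hyperhermitian quaternionic matrix 𝓜 ∈ M_ℍ(n,n) such that M = τ(𝓜)·J. -/
open scoped Quaternion
open Matrix Sum

noncomputable section

/-! `J X̄ = X J` says that `X` commutes with the quaternionic structure `v ↦ J v̄`, which
characterises the image of `τ`; the reality condition on `M` is this condition for
`X = M J⁻¹ = -M J`, so `M = τ(𝓜) J`. Writing `𝓜 = a + b·j`, `τ(𝓜) J = [[b, a], [-ā, b̄]]`,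
whose skew-symmetry says `aᴴ = a` and `bᵀ = -b`, i.e. that `𝓜` is hyperhermitian. -/

lemma conjM_mul {l m k : Type*} [Fintype m] (A : Matrix l m ℂ) (B : Matrix m k ℂ) :
    conjM (A * B) = conjM A * conjM B :=
  Matrix.map_mul

lemma conjM_neg {m k : Type*} (A : Matrix m k ℂ) : conjM (-A) = -conjM A := by
  ext; simp [conjM]

lemma conjM_Jmat (n : ℕ) : conjM (Jmat n) = Jmat n := by
  ext (i | i) (j | j) <;> simp [conjM, Jmat, Matrix.one_apply, apply_ite]

lemma Jmat_mul_Jmat (n : ℕ) : Jmat n * Jmat n = -1 := by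
  simp [Jmat, Matrix.fromBlocks_multiply, ← Matrix.fromBlocks_one, Matrix.fromBlocks_neg]

lemma Jmat_mul_conjM_tau {p m : ℕ} (Q : Matrix (Fin p) (Fin m) ℍ[ℝ]) :
    Jmat p * conjM (tau Q) = tau Q * Jmat m := by
  ext (l | l) (k | k) <;>
    simp [tau, Jmat, conjM, Matrix.mul_apply, Fintype.sum_sum_type, Matrix.one_apply]

def quatOfPair (a b : ℂ) : ℍ[ℝ] := ⟨a.re, a.im, b.re, b.im⟩

@[simp] lemma qa_quatOfPair (a b : ℂ) : qa (quatOfPair a b) = a := rfl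
@[simp] lemma qb_quatOfPair (a b : ℂ) : qb (quatOfPair a b) = b := rfl

lemma exists_tau_eq_of_Jmat_mul_conjM {p m : ℕ} (T : Matrix (Fin p ⊕ Fin p) (Fin m ⊕ Fin m) ℂ)
    (h : Jmat p * conjM T = T * Jmat m) :
    ∃ Q : Matrix (Fin p) (Fin m) ℍ[ℝ], tau Q = T := by
  have hC : ∀ l k, -starRingEnd ℂ (T (inl l) (inr k)) = T (inr l) (inl k) := fun l k => by
    simpa [Jmat, conjM, Matrix.mul_apply, Fintype.sum_sum_type, Matrix.one_apply] using
      congrFun (congrFun h (inr l)) (inr k)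
  have hD : ∀ l k, starRingEnd ℂ (T (inl l) (inl k)) = T (inr l) (inr k) := fun l k => by
    simpa [Jmat, conjM, Matrix.mul_apply, Fintype.sum_sum_type, Matrix.one_apply] using
      congrFun (congrFun h (inr l)) (inl k)
  refine ⟨Matrix.of fun l k => quatOfPair (T (inl l) (inl k)) (-T (inl l) (inr k)), ?_⟩
  ext (l | l) (k | k) <;> simp [tau, conjM, hC, hD]

lemma conjTranspose_eq_self_of_tau_mul_Jmat_skew {n : ℕ} (Q : Matrix (Fin n) (Fin n) ℍ[ℝ])
    (h : (tau Q * Jmat n)ᵀ = -(tau Q * Jmat n)) : Qᴴ = Q := by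
  have hb : ∀ l k, qb (Q k l) = -qb (Q l k) := fun l k => by
    simpa [tau, Jmat, Matrix.mul_apply, Fintype.sum_sum_type, Matrix.one_apply] using
      congrFun (congrFun h (inl l)) (inl k)
  have ha : ∀ l k, starRingEnd ℂ (qa (Q k l)) = qa (Q l k) := fun l k => by
    simpa [tau, Jmat, conjM, Matrix.mul_apply, Fintype.sum_sum_type, Matrix.one_apply] using
      congrFun (congrFun h (inl l)) (inr k)
  ext l k
  · simpa [qa] using congrArg Complex.re (ha l k)
  · simpa [qa] using congrArg Complex.im (ha l k)
  · simpa [qb, neg_eq_iff_eq_neg] using congrArg Complex.re (hb l k)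
  · simpa [qb, neg_eq_iff_eq_neg] using congrArg Complex.im (hb l k)

/-- for skew-symmetric M, the reality condition J·conj(M) = M·J holds
iff M = τ(𝓜)·J for some hyperhermitian quaternionic matrix 𝓜. -/
theorem stmt_6 {n : ℕ} (M : Matrix (Idx n) (Idx n) ℂ) (hskew : Mᵀ = -M) :
    Jmat n * conjM M = M * Jmat n ↔
      ∃ Q : Matrix (Fin n) (Fin n) ℍ[ℝ], Qᴴ = Q ∧ M = tau Q * Jmat n := by
  constructor
  · intro h
    obtain ⟨Q, hQ⟩ := exists_tau_eq_of_Jmat_mul_conjM (-(M * Jmat n)) (by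
      rw [conjM_neg, conjM_mul, conjM_Jmat, mul_neg, ← mul_assoc, h, neg_mul])
    have hM : M = tau Q * Jmat n := by
      rw [hQ, neg_mul, mul_assoc, Jmat_mul_Jmat, mul_neg, mul_one, neg_neg]
    exact ⟨Q, conjTranspose_eq_self_of_tau_mul_Jmat_skew Q (hM ▸ hskew), hM⟩
  · rintro ⟨Q, -, rfl⟩
    rw [conjM_mul, conjM_Jmat, ← mul_assoc, Jmat_mul_conjM_tau]

end
end

section
/- For every real C² function u on ℝ^{4n}, the 2n×2n complex matrix identity τ(H_u)·J = 2·(Δ_{AB}u)_{A,B=0,…,2n−1} holds pointwise, where H_u is the quaternionic Hessian of u. In particular H_u = a + b·j with complex matrix blocks a = 2(Δ_{l,n+k}u)_{l,k} and b = 2(Δ_{l,k}u)_{l,k}. -/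
open scoped Quaternion
open Matrix Sum

noncomputable section

/-! Each `∇_{Aα}` is a constant-coefficient combination of two coordinate derivatives, and each
entry `∂²u/∂q̄_l∂q_k` is a quaternion whose components are signed sums of four second partials.
Both sides of the identity are therefore linear combinations of second partials of `u`, and they
agree once the mixed partials are identified by Schwarz's theorem. Since
`τ(𝓜)J = [[b, a], [-ā, b̄]]` for `𝓜 = a + b·j`, it suffices to match the blocks. -/

lemma tau_mul_Jmat {p m : ℕ} (M : Matrix (Fin p) (Fin m) ℍ[ℝ]) :
    tau M * Jmat m = fromBlocks (M.map qb) (M.map qa) (-conjM (M.map qa)) (conjM (M.map qb)) := by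
  simp [tau, Jmat, fromBlocks_multiply]

section Derivatives

variable {n : ℕ}

lemma contDiff_pdR {m : ℕ} {u : V4 n → ℝ} (hu : ContDiff ℝ (m + 1) u) (a : Fin (4 * n)) :
    ContDiff ℝ m (pdR a u) :=
  (hu.fderiv_right le_rfl).clm_apply contDiff_const

lemma pdR_pdR_comm {u : V4 n → ℝ} (hu : ContDiff ℝ 2 u) (a b : Fin (4 * n)) (x : V4 n) :
    pdR a (pdR b u) x = pdR b (pdR a u) x := by
  have hdu : Differentiable ℝ (fderiv ℝ u) :=
    (hu.fderiv_right (m := 1) le_rfl).differentiable one_ne_zero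
  have second : ∀ v w : V4 n, fderiv ℝ (fun y => fderiv ℝ u y w) x v
      = fderiv ℝ (fderiv ℝ u) x v w := fun v w => by
    rw [fderiv_clm_apply (hdu x) (differentiableAt_const w)]
    simp
  change fderiv ℝ (fun y => fderiv ℝ u y (Pi.single b 1)) x (Pi.single a 1)
    = fderiv ℝ (fun y => fderiv ℝ u y (Pi.single a 1)) x (Pi.single b 1)
  rw [second, second]
  exact (hu.contDiffAt.isSymmSndFDerivAt (by simp)).eq _ _

lemma pdR_neg (f : V4 n → ℝ) (a : Fin (4 * n)) (x : V4 n) :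
    pdR a (fun y => -f y) x = -pdR a f x := by
  simp [pdR]

lemma pd_ofReal {f : V4 n → ℝ} {x : V4 n} (hf : DifferentiableAt ℝ f x) (a : Fin (4 * n)) :
    pd a (fun y => (f y : ℂ)) x = pdR a f x := by
  have H : HasFDerivAt (fun y => (f y : ℂ)) (Complex.ofRealCLM.comp (fderiv ℝ f x)) x :=
    Complex.ofRealCLM.hasFDerivAt.comp x hf.hasFDerivAt
  simp [pd, pdR, H.fderiv]

lemma pd_sum_mul_ofReal {ι : Type*} [Fintype ι] (c : ι → ℂ) {g : ι → V4 n → ℝ} {x : V4 n}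
    (hg : ∀ i, DifferentiableAt ℝ (g i) x) (a : Fin (4 * n)) :
    pd a (fun y => ∑ i, c i * (g i y : ℂ)) x = ∑ i, c i * pdR a (g i) x := by
  have H : HasFDerivAt (fun y => ∑ i, c i * (g i y : ℂ))
      (∑ i, c i • Complex.ofRealCLM.comp (fderiv ℝ (g i) x)) x :=
    HasFDerivAt.fun_sum fun i _ =>
      (Complex.ofRealCLM.hasFDerivAt.comp x (hg i).hasFDerivAt).const_mul (c i)
  simp [pd, pdR, H.fderiv]

lemma pdH_mk {f₀ f₁ f₂ f₃ : V4 n → ℝ} {x : V4 n} (h₀ : DifferentiableAt ℝ f₀ x)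
    (h₁ : DifferentiableAt ℝ f₁ x) (h₂ : DifferentiableAt ℝ f₂ x) (h₃ : DifferentiableAt ℝ f₃ x)
    (a : Fin (4 * n)) :
    pdH a (fun y => ⟨f₀ y, f₁ y, f₂ y, f₃ y⟩) x
      = ⟨pdR a f₀ x, pdR a f₁ x, pdR a f₂ x, pdR a f₃ x⟩ := by
  have hsum : (fun y => ⟨f₀ y, f₁ y, f₂ y, f₃ y⟩ : V4 n → ℍ[ℝ])
      = fun y => f₀ y • (1 : ℍ[ℝ]) + f₁ y • iH + f₂ y • jH + f₃ y • kH := by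
    funext y
    ext <;> simp <;> simp [iH, jH, kH]
  -- `F` must be given: `⟨_, _, _, _⟩` alone elaborates in `QuaternionAlgebra ℝ (-1) 0 (-1)`,
  -- which has no topology instance.
  have H : HasFDerivAt (F := ℍ[ℝ]) (fun y => ⟨f₀ y, f₁ y, f₂ y, f₃ y⟩)
      ((fderiv ℝ f₀ x).smulRight 1 + (fderiv ℝ f₁ x).smulRight iH
        + (fderiv ℝ f₂ x).smulRight jH + (fderiv ℝ f₃ x).smulRight kH) x := by
    rw [hsum]
    exact (((h₀.hasFDerivAt.smul_const 1).fun_add (h₁.hasFDerivAt.smul_const iH)).fun_add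
      (h₂.hasFDerivAt.smul_const jH)).fun_add (h₃.hasFDerivAt.smul_const kH)
  unfold pdH
  rw [H.fderiv]
  ext <;> simp [pdR] <;> simp [iH, jH, kH]

end Derivatives

section Nabla

variable {n : ℕ}

def nablaCoeff (A : Idx n) (α : Fin 2) : Fin 2 → ℂ :=
  match A, α with
  | inl _, 0 => ![1, Complex.I]
  | inl _, 1 => ![-1, -Complex.I]
  | inr _, 0 => ![1, -Complex.I]
  | inr _, 1 => ![1, -Complex.I]

def nablaIndex (A : Idx n) (α : Fin 2) : Fin 2 → Fin (4 * n) :=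
  match A, α with
  | inl l, 0 => ![X l 0, X l 1]
  | inl l, 1 => ![X l 2, X l 3]
  | inr l, 0 => ![X l 2, X l 3]
  | inr l, 1 => ![X l 0, X l 1]

lemma nabla_eq_sum (A : Idx n) (α : Fin 2) (f : V4 n → ℂ) (x : V4 n) :
    nabla A α f x = ∑ i, nablaCoeff A α i * pd (nablaIndex A α i) f x := by
  rcases A with l | l <;> fin_cases α <;> simp [nabla, nablaCoeff, nablaIndex] <;> ring

lemma nabla_ofReal {u : V4 n → ℝ} (hu : Differentiable ℝ u) (A : Idx n) (α : Fin 2) :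
    nabla A α (fun y => (u y : ℂ))
      = fun x => ∑ i, nablaCoeff A α i * pdR (nablaIndex A α i) u x := by
  funext x
  simp only [nabla_eq_sum, pd_ofReal (hu x)]

lemma nabla_nabla_ofReal {u : V4 n → ℝ} (hu : ContDiff ℝ 2 u) (A B : Idx n) (α β : Fin 2)
    (x : V4 n) :
    nabla A α (nabla B β (fun y => (u y : ℂ))) x
      = ∑ i, ∑ j, nablaCoeff A α i * nablaCoeff B β j
          * pdR (nablaIndex A α i) (pdR (nablaIndex B β j) u) x := by
  have hpdR : ∀ b, DifferentiableAt ℝ (pdR b u) x := fun b =>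
    (contDiff_pdR (m := 1) hu b).differentiable one_ne_zero x
  simp only [nabla_ofReal (hu.differentiable two_ne_zero), nabla_eq_sum,
    pd_sum_mul_ofReal _ (fun _ => hpdR _), Finset.mul_sum, mul_assoc]

end Nabla

section Hessian

variable {n : ℕ} {u : V4 n → ℝ}

lemma hess_apply (hu : ContDiff ℝ 2 u) (q : V4 n) (l k : Fin n) :
    Hess u q l k =
      let D : Fin 4 → Fin 4 → ℝ := fun a b => pdR (X l a) (pdR (X k b) u) q
      ⟨D 0 0 + D 1 1 + D 2 2 + D 3 3, D 1 0 - D 0 1 + D 3 2 - D 2 3,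
        D 2 0 - D 0 2 + D 1 3 - D 3 1, D 3 0 - D 0 3 + D 2 1 - D 1 2⟩ := by
  have hpdR : ∀ b, DifferentiableAt ℝ (pdR b u) q := fun b =>
    (contDiff_pdR (m := 1) hu b).differentiable one_ne_zero q
  have hdq : ∀ a, pdH a (dq k u) q = ⟨pdR a (pdR (X k 0) u) q, -pdR a (pdR (X k 1) u) q,
      -pdR a (pdR (X k 2) u) q, -pdR a (pdR (X k 3) u) q⟩ := fun a => by
    refine (pdH_mk (hpdR _) (hpdR _).fun_neg (hpdR _).fun_neg (hpdR _).fun_neg a).trans ?_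
    simp only [pdR_neg]
    rfl
  simp only [Hess, of_apply, dqbar]
  ext <;> simp only [Quaternion.re_add, Quaternion.imI_add, Quaternion.imJ_add, Quaternion.imK_add,
      Quaternion.re_mul, Quaternion.imI_mul, Quaternion.imJ_mul, Quaternion.imK_mul] <;>
    simp [hdq, iH, jH, kH] <;> ring

lemma hess_map_qb (hu : ContDiff ℝ 2 u) (q : V4 n) :
    (Hess u q).map qb = of fun l k => 2 * Delta (inl l) (inl k) u q := by
  ext l k
  simp only [map_apply, of_apply, Delta, nabla_nabla_ofReal hu, hess_apply hu]
  apply Complex.ext <;> simp [nablaCoeff, nablaIndex, Fin.sum_univ_two, qb,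
    pdR_pdR_comm hu (X k _) (X l _)] <;> ring

lemma hess_map_qa (hu : ContDiff ℝ 2 u) (q : V4 n) :
    (Hess u q).map qa = of fun l k => 2 * Delta (inl l) (inr k) u q := by
  ext l k
  simp only [map_apply, of_apply, Delta, nabla_nabla_ofReal hu, hess_apply hu]
  apply Complex.ext <;> simp [nablaCoeff, nablaIndex, Fin.sum_univ_two, qa,
    pdR_pdR_comm hu (X k _) (X l _)] <;> ring

lemma conjM_hess_map_qb (hu : ContDiff ℝ 2 u) (q : V4 n) :
    conjM ((Hess u q).map qb) = of fun l k => 2 * Delta (inr l) (inr k) u q := by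
  ext l k
  simp only [conjM, map_apply, of_apply, Delta, nabla_nabla_ofReal hu, hess_apply hu]
  apply Complex.ext <;> simp [nablaCoeff, nablaIndex, Fin.sum_univ_two, qb,
    pdR_pdR_comm hu (X k _) (X l _)] <;> ring

lemma neg_conjM_hess_map_qa (hu : ContDiff ℝ 2 u) (q : V4 n) :
    -conjM ((Hess u q).map qa) = of fun l k => 2 * Delta (inr l) (inl k) u q := by
  ext l k
  simp only [Matrix.neg_apply, conjM, map_apply, of_apply, Delta, nabla_nabla_ofReal hu,
    hess_apply hu]
  apply Complex.ext <;> simp [nablaCoeff, nablaIndex, Fin.sum_univ_two, qa,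
    pdR_pdR_comm hu (X k _) (X l _)] <;> ring

end Hessian

/-- τ(H_u)·J = 2·(Δ_{AB}u), and the blocks of H_u = a + b·j are
a = 2(Δ_{l,n+k}u) and b = 2(Δ_{l,k}u). -/
theorem stmt_10 {n : ℕ} (u : V4 n → ℝ) (hu : ContDiff ℝ 2 u) (q : V4 n) :
    tau (Hess u q) * Jmat n = (2 : ℂ) • Matrix.of (fun A B : Idx n => Delta A B u q) ∧
      (Hess u q).map qa = Matrix.of (fun l k : Fin n => 2 * Delta (inl l) (inr k) u q) ∧
      (Hess u q).map qb = Matrix.of (fun l k : Fin n => 2 * Delta (inl l) (inl k) u q) := by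
  refine ⟨?_, hess_map_qa hu q, hess_map_qb hu q⟩
  rw [tau_mul_Jmat, neg_conjM_hess_map_qa hu, conjM_hess_map_qb hu, hess_map_qb hu, hess_map_qa hu]
  ext (i | i) (j | j) <;> simp

end
end

section
/- On ℝ^{4n}∖{0}, the function u(q) = −1/‖q‖² satisfies (Δu(q))∧⋯∧(Δu(q)) = 0 (n-fold exterior power) for every q ≠ 0; that is, the quaternionic Monge–Ampère operator of −1/‖q‖² vanishes away from the origin. -/
open scoped Quaternion
open Matrix Sum

noncomputable section

/-! For a radial function `u = g(‖x‖²)` the Baston operator at `q` is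
`Δu(q) = 8 g'(‖q‖²) β_n + 4 g''(‖q‖²) ζ ∧ w`, where `β_n = ½ ∑ J_{AB} ω^A ∧ ω^B` is the standard
symplectic 2-vector and `ζ_A = ½ ∇_{A0'}‖x‖²`, `w_B = ½ ∇_{B1'}‖x‖²` at `q`. The decomposable
2-vector `ζ ∧ w` squares to zero and commutes with `β_n`, and `β_n^{n-1} ∧ ζ ∧ w` only sees the
pairing `⟨ζ, J w⟩ = ‖q‖²`, so
`(a β_n + b ζ ∧ w)^n = n! a^{n-1} (a + b ‖q‖²) Ω_{2n}`.
For `g(t) = -1/t` the last factor is `4 (2 g' + t g'')(‖q‖²) = 0`. -/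

open scoped Nat
open ExteriorAlgebra Filter Topology

section SquareZero

variable {R : Type*} [Ring R]

theorem Commute.add_pow_succ_of_mul_self_eq_zero {x y : R} (h : Commute x y) (hx : x * x = 0)
    (k : ℕ) : (x + y) ^ (k + 1) = y ^ (k + 1) + (k + 1) • (x * y ^ k) := by
  induction k with
  | zero => simp [add_comm]
  | succ k ih =>
    have hxy : (x + y) * (x * y ^ k) = x * y ^ (k + 1) := by
      rw [add_mul, ← mul_assoc, hx, zero_mul, zero_add, ← mul_assoc, ← h.eq, mul_assoc,
        ← pow_succ']
    rw [pow_succ', ih, mul_add, mul_smul_comm, hxy, add_mul, ← pow_succ',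
      succ_nsmul (x * y ^ (k + 1)) (k + 1)]
    abel

variable {α : Type*} (x : α → R) (hc : ∀ i j, Commute (x i) (x j))

def commProd (t : Finset α) : R :=
  t.noncommProd x (Pairwise.set_pairwise (fun i j _ => hc i j) _)

@[simp]
theorem commProd_empty : commProd x hc ∅ = 1 := Finset.noncommProd_empty _ _

variable [DecidableEq α]

theorem commProd_erase_mul {s : Finset α} {a : α} (ha : a ∈ s) :
    commProd x hc (s.erase a) * x a = commProd x hc s :=
  Finset.noncommProd_erase_mul _ ha _ _

theorem sum_pow_eq_factorial_smul_sum_commProd (hx : ∀ i, x i * x i = 0) (s : Finset α) (k : ℕ) :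
    (∑ i ∈ s, x i) ^ k = k ! • ∑ t ∈ s.powersetCard k, commProd x hc t := by
  induction s using Finset.induction generalizing k with
  | empty =>
    cases k with
    | zero => simp
    | succ k => simp [Finset.powersetCard_eq_empty.mpr (by simp : (∅ : Finset α).card < k + 1)]
  | @insert a s ha ih =>
    cases k with
    | zero => simp
    | succ k =>
      have hcs : Commute (x a) (∑ i ∈ s, x i) := Commute.sum_right _ _ _ fun i _ => hc a i
      have hdisj : Disjoint (s.powersetCard (k + 1)) ((s.powersetCard k).image (insert a)) := by
        refine Finset.disjoint_right.mpr fun t ht hts => ?_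
        obtain ⟨t', -, rfl⟩ := Finset.mem_image.mp ht
        exact ha ((Finset.mem_powersetCard.mp hts).1 (Finset.mem_insert_self a t'))
      have hnot : ∀ t ∈ s.powersetCard k, a ∉ t := fun t ht hat =>
        ha ((Finset.mem_powersetCard.mp ht).1 hat)
      have hinj : Set.InjOn (insert a) (s.powersetCard k : Set (Finset α)) := by
        intro t ht t' ht' h
        rw [← Finset.erase_insert (hnot t ht), ← Finset.erase_insert (hnot t' ht'), h]
      have hins : ∀ t ∈ s.powersetCard k, commProd x hc (insert a t) = x a * commProd x hc t :=
        fun t ht => Finset.noncommProd_insert_of_notMem _ _ _ _ (hnot t ht)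
      rw [Finset.sum_insert ha, hcs.add_pow_succ_of_mul_self_eq_zero (hx a) k, ih, ih,
        Finset.powersetCard_succ_insert ha, Finset.sum_union hdisj, smul_add,
        Finset.sum_image hinj, Finset.sum_congr rfl hins, ← Finset.mul_sum, mul_smul_comm,
        smul_smul, ← Nat.factorial_succ]

theorem Finset.powersetCard_eq_image_erase {s : Finset α} {k : ℕ} (hs : s.card = k + 1) :
    s.powersetCard k = s.image s.erase := by
  ext t
  rw [Finset.mem_powersetCard, Finset.mem_image]
  constructor
  · rintro ⟨hts, htk⟩
    obtain ⟨i, hit, rfl⟩ := Finset.exists_eq_insert_iff.mpr ⟨hts, by omega⟩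
    exact ⟨i, Finset.mem_insert_self i t, Finset.erase_insert hit⟩
  · rintro ⟨i, hi, rfl⟩
    exact ⟨Finset.erase_subset i s, by rw [Finset.card_erase_of_mem hi, hs]; rfl⟩

theorem sum_pow_card_eq_factorial_smul_commProd (hx : ∀ i, x i * x i = 0) (s : Finset α) :
    (∑ i ∈ s, x i) ^ s.card = s.card ! • commProd x hc s := by
  rw [sum_pow_eq_factorial_smul_sum_commProd x hc hx, Finset.powersetCard_self,
    Finset.sum_singleton]

theorem sum_pow_eq_factorial_smul_sum_commProd_erase (hx : ∀ i, x i * x i = 0) {s : Finset α}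
    {k : ℕ} (hs : s.card = k + 1) :
    (∑ i ∈ s, x i) ^ k = k ! • ∑ i ∈ s, commProd x hc (s.erase i) := by
  rw [sum_pow_eq_factorial_smul_sum_commProd x hc hx, Finset.powersetCard_eq_image_erase hs,
    Finset.sum_image (Finset.erase_injOn s)]

end SquareZero

namespace ExteriorAlgebra

variable {R M : Type*} [CommRing R] [AddCommGroup M] [Module R M]

theorem ι_mul_ι_eq_neg (u v : M) : ι R u * ι R v = -(ι R v * ι R u) :=
  eq_neg_of_add_eq_zero_left (ι_add_mul_swap u v)

theorem commute_ι_mul_ι_ι (a b c : M) : Commute (ι R a * ι R b) (ι R c) := by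
  rw [Commute, SemiconjBy, mul_assoc, ι_mul_ι_eq_neg b c, mul_neg, ← mul_assoc,
    ι_mul_ι_eq_neg a c, neg_mul, neg_neg, mul_assoc]

theorem commute_ι_mul_ι (a b c d : M) : Commute (ι R a * ι R b) (ι R c * ι R d) :=
  (commute_ι_mul_ι_ι a b c).mul_right (commute_ι_mul_ι_ι a b d)

theorem ι_mul_ι_mul_self (a b : M) : ι R a * ι R b * (ι R a * ι R b) = 0 := by
  rw [mul_assoc, ← mul_assoc (ι R b), ι_mul_ι_eq_neg b a, neg_mul, mul_neg, ← mul_assoc,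
    ← mul_assoc, ι_sq_zero, zero_mul, zero_mul, neg_zero]

end ExteriorAlgebra

section SymplecticForm

variable {n : ℕ}

theorem ω_mul_ω_swap (A B : Idx n) : ω B * ω A = -(ω A * ω B) := ι_mul_ι_eq_neg _ _

theorem ι_eq_sum_smul_ω (v : Vc n) : ι ℂ v = ∑ A, v A • ω A := by
  conv_lhs => rw [← Finset.univ_sum_single v, map_sum]
  refine Finset.sum_congr rfl fun A _ => ?_
  rw [ω, ← map_smul, ← Pi.single_smul', smul_eq_mul, mul_one]

theorem ι_mul_ι_eq_sum (v w : Vc n) :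
    ι ℂ v * ι ℂ w = ∑ A, ∑ B, (v A * w B) • (ω A * ω B) := by
  simp only [ι_eq_sum_smul_ω, Finset.sum_mul_sum, smul_mul_smul_comm]

def ωPair (l : Fin n) : EA n := ω (inl l) * ω (inr l)

theorem commute_ωPair (l m : Fin n) : Commute (ωPair l) (ωPair m) := commute_ι_mul_ι _ _ _ _

theorem ωPair_mul_self (l : Fin n) : ωPair l * ωPair l = 0 := ι_mul_ι_mul_self _ _

-- `A.elim id id` is the `l` for which `A` is one of `l`, `n + l`.
theorem ωPair_elim_mul_ω (A : Idx n) : ωPair (A.elim id id) * ω A = 0 := by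
  rcases A with l | l <;> simp only [ωPair, ω, Sum.elim_inl, Sum.elim_inr, id]
  · rw [(commute_ι_mul_ι_ι _ _ _).eq, ← mul_assoc, ι_sq_zero, zero_mul]
  · rw [mul_assoc, ι_sq_zero, mul_zero]

theorem commProd_univ_ωPair : commProd ωPair commute_ωPair Finset.univ = Ωn n := by
  change _ = (List.ofFn ωPair).prod
  rw [List.ofFn_eq_map, ← Finset.noncommProd_toFinset _ _ (fun i _ j _ _ => commute_ωPair i j)
    (List.nodup_finRange n)]
  simp only [commProd, List.toFinset_finRange]

theorem βn_eq_sum_ωPair : βn n = ∑ l, ωPair l := rfl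

theorem βn_pow : βn n ^ n = n ! • Ωn n := by
  simpa [← βn_eq_sum_ωPair, commProd_univ_ωPair] using
    sum_pow_card_eq_factorial_smul_commProd ωPair commute_ωPair ωPair_mul_self Finset.univ

theorem commProd_erase_mul_ω (l : Fin n) {C : Idx n} (hC : C.elim id id ≠ l) :
    commProd ωPair commute_ωPair (Finset.univ.erase l) * ω C = 0 := by
  have hm : C.elim id id ∈ Finset.univ.erase l := Finset.mem_erase.mpr ⟨hC, Finset.mem_univ _⟩
  rw [← commProd_erase_mul _ _ hm, mul_assoc, ωPair_elim_mul_ω, mul_zero]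

theorem commProd_erase_mul_ωPair (l : Fin n) :
    commProd ωPair commute_ωPair (Finset.univ.erase l) * ωPair l = Ωn n := by
  rw [commProd_erase_mul _ _ (Finset.mem_univ l), commProd_univ_ωPair]

theorem commProd_erase_mul_ω_mul_ω (l : Fin n) (A B : Idx n) :
    commProd ωPair commute_ωPair (Finset.univ.erase l) * (ω A * ω B) =
      if A.elim id id = l then Jmat n A B • Ωn n else 0 := by
  by_cases hA : A.elim id id = l
  swap
  · rw [if_neg hA, ← mul_assoc, commProd_erase_mul_ω l hA, zero_mul]
  rw [if_pos hA]
  by_cases hB : B.elim id id = l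
  swap
  · rw [ω_mul_ω_swap B A, mul_neg, ← mul_assoc, commProd_erase_mul_ω l hB, zero_mul, neg_zero]
    rcases A with m | m <;> rcases B with m' | m' <;>
      simp only [Sum.elim_inl, Sum.elim_inr, id] at hA hB <;> subst m <;>
      simp [Jmat, Ne.symm hB]
  rcases A with m | m <;> rcases B with m' | m' <;>
    simp only [Sum.elim_inl, Sum.elim_inr, id] at hA hB <;> subst m m'
  · simp [Jmat, ω]
  · simpa [Jmat, ωPair] using commProd_erase_mul_ωPair l
  · have h := commProd_erase_mul_ωPair l
    rw [ωPair] at h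
    simp [Jmat, ω_mul_ω_swap (inl l), h]
  · simp [Jmat, ω]

theorem βn_pow_mul_ω_mul_ω {m : ℕ} (A B : Idx (m + 1)) :
    βn (m + 1) ^ m * (ω A * ω B) = (m ! * Jmat (m + 1) A B) • Ωn (m + 1) := by
  rw [βn_eq_sum_ωPair, sum_pow_eq_factorial_smul_sum_commProd_erase ωPair commute_ωPair
    ωPair_mul_self (by simp), smul_mul_assoc, Finset.sum_mul]
  simp [commProd_erase_mul_ω_mul_ω, mul_smul, Nat.cast_smul_eq_nsmul]

theorem βn_pow_mul_ι_mul_ι {m : ℕ} (v w : Vc (m + 1)) :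
    βn (m + 1) ^ m * (ι ℂ v * ι ℂ w) = (m ! * v ⬝ᵥ (Jmat (m + 1) *ᵥ w)) • Ωn (m + 1) := by
  rw [ι_mul_ι_eq_sum]
  simp_rw [Finset.mul_sum, mul_smul_comm, βn_pow_mul_ω_mul_ω, smul_smul, ← Finset.sum_smul]
  congr 1
  simp only [dotProduct, mulVec, Finset.mul_sum]
  exact Finset.sum_congr rfl fun A _ => Finset.sum_congr rfl fun B _ => by ring

theorem pow_smul_βn_add_smul_ι_mul_ι {m : ℕ} (a b : ℂ) (v w : Vc (m + 1)) :
    (a • βn (m + 1) + b • (ι ℂ v * ι ℂ w)) ^ (m + 1) =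
      ((m + 1)! * a ^ m * (a + b * v ⬝ᵥ (Jmat (m + 1) *ᵥ w))) • Ωn (m + 1) := by
  have hσβ : Commute (ι ℂ v * ι ℂ w) (βn (m + 1)) :=
    Commute.sum_right _ _ _ fun l _ => commute_ι_mul_ι _ _ _ _
  have hsq : b • (ι ℂ v * ι ℂ w) * b • (ι ℂ v * ι ℂ w) = 0 := by
    rw [smul_mul_smul_comm, ι_mul_ι_mul_self, smul_zero]
  rw [add_comm (a • _), ((hσβ.smul_right a).smul_left b).add_pow_succ_of_mul_self_eq_zero hsq m,
    smul_pow, smul_pow, βn_pow, smul_mul_smul_comm, (hσβ.pow_right m).eq, βn_pow_mul_ι_mul_ι,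
    ← Nat.cast_smul_eq_nsmul ℂ, ← Nat.cast_smul_eq_nsmul ℂ, smul_smul, smul_smul, smul_smul,
    ← add_smul]
  congr 1
  push_cast [Nat.factorial_succ]
  ring

end SymplecticForm

section Derivatives

variable {n : ℕ}

def sqNorm (x : V4 n) : ℝ := ∑ a, x a ^ 2

theorem X_inj {l m : Fin n} {γ β : Fin 4} : X l γ = X m β ↔ l = m ∧ γ = β := by
  refine ⟨fun h => ?_, by rintro ⟨rfl, rfl⟩; rfl⟩
  have h' : 4 * l.val + γ.val = 4 * m.val + β.val := congrArg Fin.val h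
  exact ⟨Fin.ext (by omega), Fin.ext (by omega)⟩

theorem sum_eq_sum_sum_X {M : Type*} [AddCommMonoid M] (f : Fin (4 * n) → M) :
    ∑ a, f a = ∑ l, ∑ γ, f (X l γ) := by
  let e : Fin n × Fin 4 ≃ Fin (4 * n) := finProdFinEquiv.trans (finCongr (mul_comm n 4))
  have he : ∀ p, e p = X p.1 p.2 := fun p => Fin.ext (by simp [e, X, add_comm])
  rw [← e.sum_comp, Fintype.sum_prod_type]
  simp only [he]

theorem hasFDerivAt_sqNorm (q : V4 n) :
    HasFDerivAt sqNorm (∑ a, (2 * q a) • (ContinuousLinearMap.proj a : V4 n →L[ℝ] ℝ)) q := by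
  refine HasFDerivAt.fun_sum fun a _ => ?_
  simpa [Function.comp_def] using (hasDerivAt_pow 2 (q a)).comp_hasFDerivAt q
    (ContinuousLinearMap.proj a : V4 n →L[ℝ] ℝ).hasFDerivAt

theorem continuous_sqNorm : Continuous (sqNorm (n := n)) :=
  continuous_finsetSum _ fun a _ => (continuous_apply a).pow 2

theorem pd_congr {f g : V4 n → ℂ} {q : V4 n} (h : f =ᶠ[𝓝 q] g) (a : Fin (4 * n)) :
    pd a f q = pd a g q := by
  simp only [pd, h.fderiv_eq]

theorem pd_mul {f g : V4 n → ℂ} {q : V4 n} (hf : DifferentiableAt ℝ f q)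
    (hg : DifferentiableAt ℝ g q) (a : Fin (4 * n)) :
    pd a (fun x => f x * g x) q = f q * pd a g q + g q * pd a f q := by
  simp [pd, fderiv_fun_mul hf hg]

theorem pd_ofReal_comp {ψ : V4 n → ℝ} {g : ℝ → ℝ} {g' : ℝ} {q : V4 n}
    (hψ : DifferentiableAt ℝ ψ q) (hg : HasDerivAt g g' (ψ q)) (a : Fin (4 * n)) :
    pd a (fun x => ((g (ψ x) : ℝ) : ℂ)) q = g' * pd a (fun x => ((ψ x : ℝ) : ℂ)) q := by
  have h1 := Complex.ofRealCLM.hasFDerivAt.comp q (hg.comp_hasFDerivAt q hψ.hasFDerivAt)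
  have h2 := Complex.ofRealCLM.hasFDerivAt.comp q hψ.hasFDerivAt
  simp only [pd, Function.comp_def, Complex.ofRealCLM_apply] at h1 h2 ⊢
  simp [h1.fderiv, h2.fderiv]

theorem pd_sqNorm (q : V4 n) (a : Fin (4 * n)) :
    pd a (fun x => ((sqNorm x : ℝ) : ℂ)) q = 2 * q a := by
  have h := Complex.ofRealCLM.hasFDerivAt.comp q (hasFDerivAt_sqNorm q)
  simp only [pd, Function.comp_def, Complex.ofRealCLM_apply] at h ⊢
  simp [h.fderiv, Pi.single_apply]

theorem pd_continuousLinearMap (L : V4 n →L[ℝ] ℂ) (q : V4 n) (a : Fin (4 * n)) :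
    pd a L q = L (Pi.single a 1) := by
  simp [pd]

def complexCoord (a : Fin (4 * n)) : V4 n →L[ℝ] ℂ :=
  Complex.ofRealCLM.comp (ContinuousLinearMap.proj a)

-- The conjugate coordinates `conj (zc A α)`, as real-linear maps.
def zbar (A : Idx n) (α : Fin 2) : V4 n →L[ℝ] ℂ :=
  match A with
  | inl l =>
      if α = 0 then complexCoord (X l 0) + Complex.I • complexCoord (X l 1)
      else -complexCoord (X l 2) - Complex.I • complexCoord (X l 3)
  | inr l =>
      if α = 0 then complexCoord (X l 2) - Complex.I • complexCoord (X l 3)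
      else complexCoord (X l 0) - Complex.I • complexCoord (X l 1)

theorem nabla_congr {f g : V4 n → ℂ} {q : V4 n} (h : f =ᶠ[𝓝 q] g) (A : Idx n) (α : Fin 2) :
    nabla A α f q = nabla A α g q := by
  cases A <;> simp only [nabla, pd_congr h]

theorem nabla_mul {f g : V4 n → ℂ} {q : V4 n} (hf : DifferentiableAt ℝ f q)
    (hg : DifferentiableAt ℝ g q) (A : Idx n) (α : Fin 2) :
    nabla A α (fun x => f x * g x) q = f q * nabla A α g q + g q * nabla A α f q := by
  cases A <;> simp only [nabla, pd_mul hf hg] <;> split_ifs <;> ring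

theorem nabla_ofReal_comp {ψ : V4 n → ℝ} {g : ℝ → ℝ} {g' : ℝ} {q : V4 n}
    (hψ : DifferentiableAt ℝ ψ q) (hg : HasDerivAt g g' (ψ q)) (A : Idx n) (α : Fin 2) :
    nabla A α (fun x => ((g (ψ x) : ℝ) : ℂ)) q = g' * nabla A α (fun x => ((ψ x : ℝ) : ℂ)) q := by
  cases A <;> simp only [nabla, pd_ofReal_comp hψ hg] <;> split_ifs <;> ring

theorem nabla_sqNorm (q : V4 n) (A : Idx n) (α : Fin 2) :
    nabla A α (fun x => ((sqNorm x : ℝ) : ℂ)) q = 2 * zbar A α q := by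
  cases A <;> simp only [nabla, zbar, pd_sqNorm] <;> split_ifs <;> simp [complexCoord] <;> ring

theorem nabla_zbar (q : V4 n) (A B : Idx n) : nabla A 0 (zbar B 1) q = 2 * Jmat n A B := by
  rcases A with m | m <;> rcases B with l | l <;> simp only [nabla, pd_continuousLinearMap] <;>
    simp [zbar, complexCoord, Pi.single_apply, X_inj, Jmat, Matrix.one_apply, eq_comm] <;>
    split_ifs <;> norm_num

theorem nabla_nabla_comp_sqNorm {g g' : ℝ → ℝ} {g'' : ℝ} {q : V4 n}
    (hg : ∀ᶠ t in 𝓝 (sqNorm q), HasDerivAt g (g' t) t) (hg' : HasDerivAt g' g'' (sqNorm q))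
    (A B : Idx n) :
    nabla A 0 (nabla B 1 fun x => ((g (sqNorm x) : ℝ) : ℂ)) q =
      4 * (g'' * zbar A 0 q * zbar B 1 q + g' (sqNorm q) * Jmat n A B) := by
  have hdiff : Differentiable ℝ (sqNorm (n := n)) :=
    fun x => (hasFDerivAt_sqNorm x).differentiableAt
  have hfirst : (nabla B 1 fun x => ((g (sqNorm x) : ℝ) : ℂ)) =ᶠ[𝓝 q]
      fun x => ((2 * g' (sqNorm x) : ℝ) : ℂ) * zbar B 1 x := by
    filter_upwards [continuous_sqNorm.continuousAt.eventually hg] with x hx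
    rw [nabla_ofReal_comp (hdiff x) hx, nabla_sqNorm]
    push_cast
    ring
  have hdiff' : DifferentiableAt ℝ (fun x => ((2 * g' (sqNorm x) : ℝ) : ℂ)) q :=
    Complex.ofRealCLM.differentiableAt.comp q
      ((hg'.differentiableAt.const_mul 2).comp q (hdiff q))
  rw [nabla_congr hfirst, nabla_mul hdiff' (zbar B 1).differentiableAt,
    nabla_ofReal_comp (g := fun t => 2 * g' t) (hdiff q) (hg'.const_mul 2), nabla_sqNorm,
    nabla_zbar]
  push_cast
  ring

end Derivatives

section BastonOperator

variable {n : ℕ}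

theorem Jmat_apply_swap (A B : Idx n) : Jmat n B A = -Jmat n A B := by
  rcases A with m | m <;> rcases B with l | l <;> simp [Jmat, Matrix.one_apply, eq_comm]

theorem sum_Jmat_smul_ω_mul_ω : ∑ A, ∑ B, Jmat n A B • (ω A * ω B) = (2 : ℂ) • βn n := by
  simp [Jmat, Fintype.sum_sum_type, Matrix.one_apply, ω_mul_ω_swap (inl _) (inr _), βn, two_smul]

theorem sum_smul_ω_mul_ω (c d : ℂ) (v w : Vc n) :
    ∑ A, ∑ B, (c * (v A * w B - v B * w A) + d * Jmat n A B) • (ω A * ω B) =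
      (2 * c) • (ι ℂ v * ι ℂ w) + (2 * d) • βn n := by
  have hswap : ∑ A, ∑ B, (v B * w A) • (ω A * ω B) = -(ι ℂ v * ι ℂ w) := by
    simp_rw [mul_comm (v _), ← ι_mul_ι_eq_sum, ι_mul_ι_eq_neg w]
  have hpull : ∀ (e : ℂ) (f : Idx n → Idx n → ℂ),
      ∑ A, ∑ B, (e * f A B) • (ω A * ω B) = e • ∑ A, ∑ B, f A B • (ω A * ω B) := by
    simp only [Finset.smul_sum, smul_smul, implies_true]
  simp only [mul_sub, sub_smul, add_smul, Finset.sum_add_distrib, Finset.sum_sub_distrib, hpull,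
    ← ι_mul_ι_eq_sum, hswap]
  rw [hpull d (Jmat n), sum_Jmat_smul_ω_mul_ω]
  module

theorem Delta_comp_sqNorm {g g' : ℝ → ℝ} {g'' : ℝ} {q : V4 n}
    (hg : ∀ᶠ t in 𝓝 (sqNorm q), HasDerivAt g (g' t) t) (hg' : HasDerivAt g' g'' (sqNorm q))
    (A B : Idx n) :
    Delta A B (fun x => g (sqNorm x)) q =
      2 * g'' * (zbar A 0 q * zbar B 1 q - zbar B 0 q * zbar A 1 q) +
        4 * g' (sqNorm q) * Jmat n A B := by
  simp only [Delta, nabla_nabla_comp_sqNorm hg hg', Jmat_apply_swap A B]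
  ring

theorem Baston_comp_sqNorm {g g' : ℝ → ℝ} {g'' : ℝ} {q : V4 n}
    (hg : ∀ᶠ t in 𝓝 (sqNorm q), HasDerivAt g (g' t) t) (hg' : HasDerivAt g' g'' (sqNorm q)) :
    Baston (fun x => g (sqNorm x)) q =
      (8 * g' (sqNorm q) : ℂ) • βn n +
        (4 * g'' : ℂ) • (ι ℂ (fun A => zbar A 0 q) * ι ℂ (fun B => zbar B 1 q)) := by
  simp only [Baston, Delta_comp_sqNorm hg hg', sum_smul_ω_mul_ω]
  module

theorem zbar_dotProduct_Jmat_mulVec (x : V4 n) :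
    (fun A => zbar A 0 x) ⬝ᵥ (Jmat n *ᵥ fun B => zbar B 1 x) = sqNorm x := by
  have hJ : ∀ w : Vc n, Jmat n *ᵥ w = Sum.elim (fun l => w (inr l)) (fun l => -w (inl l)) := by
    intro w
    ext (l | l) <;> simp [Jmat, fromBlocks_mulVec, Matrix.neg_mulVec]
  simp only [hJ, dotProduct, Fintype.sum_sum_type, Sum.elim_inl, Sum.elim_inr, sqNorm,
    Complex.ofReal_sum, sum_eq_sum_sum_X fun a => ((x a ^ 2 : ℝ) : ℂ), ← Finset.sum_add_distrib]
  refine Finset.sum_congr rfl fun l _ => ?_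
  simp [zbar, complexCoord, Fin.sum_univ_four]
  linear_combination (-(x (X l 1) : ℂ) ^ 2 - (x (X l 3) : ℂ) ^ 2) * Complex.I_sq

theorem sqNorm_eq_zero_iff {x : V4 n} : sqNorm x = 0 ↔ x = 0 := by
  rw [sqNorm, Finset.sum_eq_zero_iff_of_nonneg fun a _ => sq_nonneg (x a)]
  simp [funext_iff]

theorem Baston_comp_sqNorm_pow {m : ℕ} {g g' : ℝ → ℝ} {g'' : ℝ} {q : V4 (m + 1)}
    (hg : ∀ᶠ t in 𝓝 (sqNorm q), HasDerivAt g (g' t) t) (hg' : HasDerivAt g' g'' (sqNorm q)) :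
    Baston (fun x => g (sqNorm x)) q ^ (m + 1) =
      (((m + 1)! * (8 * g' (sqNorm q)) ^ m * (8 * g' (sqNorm q) + 4 * g'' * sqNorm q) : ℝ) : ℂ) •
        Ωn (m + 1) := by
  rw [Baston_comp_sqNorm hg hg', pow_smul_βn_add_smul_ι_mul_ι, zbar_dotProduct_Jmat_mulVec]
  push_cast
  rfl

end BastonOperator

/-- the quaternionic Monge–Ampère operator of −1/‖q‖² vanishes
away from the origin: (Δ(−1/‖q‖²))^∧n = 0 for q ≠ 0. -/
theorem stmt_17 {n : ℕ} (q : V4 n) (hq : q ≠ 0) :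
    (Baston (fun x => -(1 / (∑ a, x a ^ 2))) q) ^ n = 0 := by
  obtain ⟨m, rfl⟩ : ∃ m, n = m + 1 :=
    Nat.exists_eq_succ_of_ne_zero fun h => hq (funext fun a => absurd a.isLt (by simp [h]))
  have hρ : sqNorm q ≠ 0 := sqNorm_eq_zero_iff.not.mpr hq
  have hg : ∀ᶠ t in 𝓝 (sqNorm q), HasDerivAt (fun t => -(1 / t)) ((t ^ 2)⁻¹) t := by
    filter_upwards [isOpen_ne.mem_nhds hρ] with t ht
    simpa [one_div] using (hasDerivAt_inv ht).fun_neg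
  have hg' : HasDerivAt (fun t => (t ^ 2)⁻¹) (-2 / sqNorm q ^ 3) (sqNorm q) :=
    ((hasDerivAt_pow 2 (sqNorm q)).fun_inv (pow_ne_zero 2 hρ)).congr_deriv (by field_simp; ring)
  have hcoeff : 8 * (sqNorm q ^ 2)⁻¹ + 4 * (-2 / sqNorm q ^ 3) * sqNorm q = 0 := by
    field_simp
    ring
  change Baston (fun x => -(1 / sqNorm x)) q ^ (m + 1) = 0
  rw [Baston_comp_sqNorm_pow hg hg', hcoeff, mul_zero, Complex.ofReal_zero, zero_smul]

end
end

section
/- Let 𝓤 ∈ M_ℍ(n,n) act on ℍⁿ ≅ ℝ^{4n} by the real-linear map q ↦ 𝓤q, let ũ be a real C¹ function on ℝ^{4n}, and set u(q) = ũ(𝓤q). Then for every A = 0,…,2n−1, α ∈ {0',1'}, and q ∈ ℝ^{4n}: (∇_{Aα}u)(q) = Σ_{B=0}^{2n−1} conj(τ(𝓤))_{BA} · (∇_{Bα}ũ)(𝓤q). -/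
open scoped Quaternion
open Matrix Sum

noncomputable section

/-!
Write `∂_{l,c}` for the derivative along the quaternionic coordinate `q_l` in the direction
`c ∈ ℍ`. The pair `(∇_{lα}, ∇_{(n+l)α})` is a fixed `ℂ`-linear combination of `∂_{l,1}, ∂_{l,i},
∂_{l,j}, ∂_{l,k}`, and by the chain rule `∂_{l,c}(ũ ∘ 𝓤) = Σ_k ∂_{k,𝓤_{kl} c} ũ`. So everything
reduces to one quaternion `u = a + b·j`: precomposing a real-linear `ψ : ℍ → ℂ` with `c ↦ u c`
transforms the pair by the matrix `[[conj a, b], [-conj b, a]]`, the block pattern of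
`conj τ(𝓤)` read column-wise.
-/

open Complex in
def nablaUp (α : Fin 2) : (ℍ[ℝ] → ℂ) →ₗ[ℂ] ℂ :=
  if α = 0 then LinearMap.proj 1 + I • LinearMap.proj iH
  else -LinearMap.proj jH - I • LinearMap.proj kH

open Complex in
def nablaDown (α : Fin 2) : (ℍ[ℝ] → ℂ) →ₗ[ℂ] ℂ :=
  if α = 0 then LinearMap.proj jH - I • LinearMap.proj kH
  else LinearMap.proj 1 - I • LinearMap.proj iH

/-- `∇_{Aα}` expressed through the derivatives `Ψ l : ℍ → ℂ` along the quaternionic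
coordinates `q_l`. -/
def nablaQuat {n : ℕ} (A : Idx n) (α : Fin 2) (Ψ : Fin n → ℍ[ℝ] → ℂ) : ℂ :=
  Sum.elim (fun l => nablaUp α (Ψ l)) (fun l => nablaDown α (Ψ l)) A

lemma LinearMap.apply_quaternion {M : Type*} [AddCommGroup M] [Module ℝ M]
    (ψ : ℍ[ℝ] →ₗ[ℝ] M) (c : ℍ[ℝ]) :
    ψ c = c.re • ψ 1 + c.imI • ψ iH + c.imJ • ψ jH + c.imK • ψ kH := by
  have hc : c = c.re • 1 + c.imI • iH + c.imJ • jH + c.imK • kH := by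
    ext <;> simp [Quaternion.re_smul] <;> simp [iH, jH, kH]
  conv_lhs => rw [hc]
  simp only [map_add, map_smul]

lemma qa_eq_re_add_imI_mul_I (u : ℍ[ℝ]) : qa u = u.re + u.imI * Complex.I := by
  apply Complex.ext <;> simp [qa]

lemma qb_eq_imJ_add_imK_mul_I (u : ℍ[ℝ]) : qb u = u.imJ + u.imK * Complex.I := by
  apply Complex.ext <;> simp [qb]

lemma nablaUp_mulLeft (ψ : ℍ[ℝ] →ₗ[ℝ] ℂ) (u : ℍ[ℝ]) (α : Fin 2) :
    nablaUp α (fun c => ψ (u * c)) =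
      starRingEnd ℂ (qa u) * nablaUp α ψ + qb u * nablaDown α ψ := by
  fin_cases α <;>
  · simp only [nablaUp, nablaDown]
    simp [ψ.apply_quaternion (u * _)]
    simp [iH, jH, kH, qa_eq_re_add_imI_mul_I, qb_eq_imJ_add_imK_mul_I]
    ring_nf
    simp only [Complex.I_sq]
    ring

lemma nablaDown_mulLeft (ψ : ℍ[ℝ] →ₗ[ℝ] ℂ) (u : ℍ[ℝ]) (α : Fin 2) :
    nablaDown α (fun c => ψ (u * c)) =
      -starRingEnd ℂ (qb u) * nablaUp α ψ + qa u * nablaDown α ψ := by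
  fin_cases α <;>
  · simp only [nablaUp, nablaDown]
    simp [ψ.apply_quaternion (u * _)]
    simp [iH, jH, kH, qa_eq_re_add_imI_mul_I, qb_eq_imJ_add_imK_mul_I]
    ring_nf
    simp only [Complex.I_sq]
    ring

lemma nablaQuat_mulVec {n : ℕ} (U : Matrix (Fin n) (Fin n) ℍ[ℝ]) (Ψ : Fin n → ℍ[ℝ] →ₗ[ℝ] ℂ)
    (A : Idx n) (α : Fin 2) :
    nablaQuat A α (fun l c => ∑ k, Ψ k (U k l * c)) =
      ∑ B, conjM (tau U) B A * nablaQuat B α (fun k => Ψ k) := by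
  have hsum (l : Fin n) : (fun c => ∑ k, Ψ k (U k l * c)) = ∑ k, fun c => Ψ k (U k l * c) := by
    funext c; simp
  rcases A with l | l <;>
  · simp only [nablaQuat, Sum.elim_inl, Sum.elim_inr, hsum, map_sum, nablaUp_mulLeft,
      nablaDown_mulLeft, Fintype.sum_sum_type, ← Finset.sum_add_distrib]
    refine Finset.sum_congr rfl fun k _ => ?_
    simp [conjM, tau]

def quatBasis : Fin 4 → ℍ[ℝ] := ![1, iH, jH, kH]

lemma X_eq_X_iff {n : ℕ} {m l : Fin n} {δ γ : Fin 4} : X m δ = X l γ ↔ m = l ∧ δ = γ := by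
  simp only [X, Fin.ext_iff]
  omega

lemma X_div_mod {n : ℕ} (a : Fin (4 * n)) :
    X ⟨a.val / 4, by have := a.isLt; omega⟩ ⟨a.val % 4, by omega⟩ = a := by
  ext; simp only [X]; omega

lemma comp4_add (p r : ℍ[ℝ]) : comp4 (p + r) = comp4 p + comp4 r := by
  funext i; fin_cases i <;> simp [comp4]

lemma comp4_smul (c : ℝ) (p : ℍ[ℝ]) : comp4 (c • p) = c • comp4 p := by
  funext i; fin_cases i <;> simp [comp4]

lemma comp4_quatBasis (γ δ : Fin 4) : comp4 (quatBasis γ) δ = if δ = γ then 1 else 0 := by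
  fin_cases γ <;> fin_cases δ <;> simp [comp4, quatBasis, iH, jH, kH]

/-- The inverse of `quatv`. -/
def realCoords {n : ℕ} : (Fin n → ℍ[ℝ]) →ₗ[ℝ] V4 n where
  toFun w a := comp4 (w ⟨a.val / 4, by have := a.isLt; omega⟩) ⟨a.val % 4, by omega⟩
  map_add' v w := by funext a; simp [comp4_add]
  map_smul' c w := by funext a; simp [comp4_smul]

lemma realCoords_X {n : ℕ} (w : Fin n → ℍ[ℝ]) (l : Fin n) (β : Fin 4) :
    realCoords w (X l β) = comp4 (w l) β := by
  change comp4 (w ⟨_, _⟩) ⟨_, _⟩ = _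
  congr 2 <;> simp only [Fin.ext_iff, X] <;> omega

lemma quatv_realCoords {n : ℕ} (w : Fin n → ℍ[ℝ]) : quatv (realCoords w) = w := by
  funext l; ext <;> simp [quatv, realCoords_X, comp4]

lemma realCoords_single {n : ℕ} (l : Fin n) (γ : Fin 4) :
    realCoords (Pi.single l (quatBasis γ)) = Pi.single (X l γ) 1 := by
  funext a
  obtain ⟨m, δ, rfl⟩ : ∃ m δ, X m δ = a := ⟨_, _, X_div_mod a⟩
  rw [realCoords_X]
  by_cases h : m = l
  · subst h; simp [Pi.single_apply, X_eq_X_iff, comp4_quatBasis]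
  · simp [h, X_eq_X_iff, comp4]
    fin_cases δ <;> rfl

lemma act_eq_realCoords {n : ℕ} (U : Matrix (Fin n) (Fin n) ℍ[ℝ]) (v : V4 n) :
    act U v = realCoords (U *ᵥ quatv v) := rfl

lemma quatv_add {n : ℕ} (v w : V4 n) : quatv (v + w) = quatv v + quatv w := by
  funext l; ext <;> simp [quatv] <;> rfl

lemma quatv_smul {n : ℕ} (c : ℝ) (v : V4 n) : quatv (c • v) = c • quatv v := by
  funext l; ext <;> simp [quatv] <;> rfl

def actₗ {n : ℕ} (U : Matrix (Fin n) (Fin n) ℍ[ℝ]) : V4 n →ₗ[ℝ] V4 n where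
  toFun := act U
  map_add' v w := by simp only [act_eq_realCoords, quatv_add, mulVec_add, map_add]
  map_smul' c v := by
    simp only [act_eq_realCoords, quatv_smul, mulVec_smul, map_smul, RingHom.id_apply]

lemma act_realCoords_single {n : ℕ} (U : Matrix (Fin n) (Fin n) ℍ[ℝ]) (l : Fin n) (c : ℍ[ℝ]) :
    act U (realCoords (Pi.single l c)) = ∑ k, realCoords (Pi.single k (U k l * c)) := by
  rw [act_eq_realCoords, quatv_realCoords, ← map_sum, Finset.univ_sum_single (fun k => U k l * c)]
  congr 1
  funext k
  simp

def quatDeriv {n : ℕ} (f : V4 n → ℂ) (q : V4 n) (l : Fin n) : ℍ[ℝ] →ₗ[ℝ] ℂ :=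
  (fderiv ℝ f q : V4 n →ₗ[ℝ] ℂ) ∘ₗ realCoords ∘ₗ LinearMap.single ℝ (fun _ => ℍ[ℝ]) l

lemma pd_X_eq_quatDeriv {n : ℕ} (f : V4 n → ℂ) (q : V4 n) (l : Fin n) (γ : Fin 4) :
    pd (X l γ) f q = quatDeriv f q l (quatBasis γ) := by
  simp [quatDeriv, pd, realCoords_single]

lemma nabla_eq_nablaQuat {n : ℕ} (A : Idx n) (α : Fin 2) (f : V4 n → ℂ) (q : V4 n) :
    nabla A α f q = nablaQuat A α (fun l => quatDeriv f q l) := by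
  rcases A with l | l <;> fin_cases α <;>
    simp [nabla, nablaQuat, nablaUp, nablaDown, pd_X_eq_quatDeriv, quatBasis]

lemma quatDeriv_comp_act {n : ℕ} (U : Matrix (Fin n) (Fin n) ℍ[ℝ]) {f : V4 n → ℂ} {q : V4 n}
    (hf : DifferentiableAt ℝ f (act U q)) (l : Fin n) (c : ℍ[ℝ]) :
    quatDeriv (fun y => f (act U y)) q l c = ∑ k, quatDeriv f (act U q) k (U k l * c) := by
  set L := (actₗ U).toContinuousLinearMap
  have hchain : fderiv ℝ (f ∘ L) q = (fderiv ℝ f (L q)).comp L := by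
    rw [fderiv_comp (g := f) (f := L) q hf L.differentiableAt, L.fderiv]
  change fderiv ℝ (f ∘ L) q _ = _
  rw [hchain]
  change fderiv ℝ f (act U q) (act U _) = _
  simp [quatDeriv, act_realCoords_single]

/-- transformation rule for ∇_{Aα} under a quaternionic linear map:
(∇_{Aα}u)(q) = Σ_B conj(τ(𝓤))_{BA}(∇_{Bα}ũ)(𝓤q), where u = ũ∘𝓤. -/
theorem stmt_18 {n : ℕ} (U : Matrix (Fin n) (Fin n) ℍ[ℝ]) (ut : V4 n → ℝ)
    (hut : ContDiff ℝ 1 ut) (A : Idx n) (α : Fin 2) (q : V4 n) :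
    nablaR A α (fun y => ut (act U y)) q =
      ∑ B : Idx n, conjM (tau U) B A * nablaR B α ut (act U q) := by
  have hf : DifferentiableAt ℝ (fun x => (ut x : ℂ)) (act U q) :=
    Complex.ofRealCLM.differentiableAt.comp _ (hut.differentiable one_ne_zero _)
  calc nablaR A α (fun y => ut (act U y)) q
      = nablaQuat A α (fun l => quatDeriv (fun y => (ut (act U y) : ℂ)) q l) :=
        nabla_eq_nablaQuat ..
    _ = nablaQuat A α
          (fun l c => ∑ k, quatDeriv (fun x => (ut x : ℂ)) (act U q) k (U k l * c)) := by
        congr 1; funext l c; exact quatDeriv_comp_act U hf l c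
    _ = ∑ B, conjM (tau U) B A * nablaR B α ut (act U q) := by
        simp only [nablaQuat_mulVec, nablaR, nabla_eq_nablaQuat]

end
end
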